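/- arXiv:1107.4699 — 3 statements merged into one kernel-verified Lean document; each statement's English description precedes it below -/
import Mathlib

section
/- If I_ℓ ⊋ ⋯ ⊋ I₀ is a chain of distinct binomial ideals in a commutative monoid algebra k[Q] all inducing the same congruence on Q, then ℓ ≤ 1. -/
/-! If `A < B` are binomial ideals with the same congruence, some monomial lies in `B \ A`.
Indeed, take a generator `t^u - λ t^v` of `B` outside `A`. If `λ = 0` it is a monomial.
Otherwise `u ∼ v` gives `t^u - μ t^v ∈ A` with `μ ≠ λ`, so the difference `(λ - μ) t^v` puts
`t^v` in `B`; and `t^v ∈ A` would put `t^u`, hence the generator, in `A`.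

In a chain `I₀ < I₁ < I₂`, take monomials `t^u ∈ I₁ \ I₀` and `t^w ∈ I₂ \ I₁`. Then
`t^u - t^w ∈ I₂`, so `u ∼ w`, so `t^u - μ t^w ∈ I₁` for some `μ ≠ 0`, and `t^u ∈ I₁` gives
`t^w ∈ I₁`, a contradiction. -/

variable {k : Type*} [Field k] {Q : Type*} [AddCommMonoid Q]

/-- The monomial `t^q` in the monoid algebra `k[Q]`. -/
noncomputable def mono (k : Type*) [Field k] {Q : Type*} [AddCommMonoid Q] (q : Q) :
    AddMonoidAlgebra k Q := AddMonoidAlgebra.single q 1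

/-- A binomial ideal is one generated by binomials `t^u − λ t^v`, `λ ∈ k`
possibly `0`. -/
def IsBinomialIdeal (I : Ideal (AddMonoidAlgebra k Q)) : Prop :=
  ∃ S : Set (AddMonoidAlgebra k Q), I = Ideal.span S ∧
    ∀ f ∈ S, ∃ (u v : Q) (lam : k), f = mono k u - lam • mono k v

/-- The congruence induced by a binomial ideal. -/
def indCong (I : Ideal (AddMonoidAlgebra k Q)) (u v : Q) : Prop :=
  ∃ lam : k, lam ≠ 0 ∧ mono k u - lam • mono k v ∈ I

namespace BinomialIdeal

variable {I : Ideal (AddMonoidAlgebra k Q)} {u v : Q}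

theorem smul_mem_iff {c : k} (hc : c ≠ 0) {x : AddMonoidAlgebra k Q} : c • x ∈ I ↔ x ∈ I :=
  Submodule.smul_mem_iff (I.restrictScalars k) hc

theorem mono_mem_of_sub_smul_mem {c : k} (h : mono k u - c • mono k v ∈ I)
    (hv : mono k v ∈ I) : mono k u ∈ I := by
  simpa using I.add_mem h (I.smul_of_tower_mem c hv)

theorem mono_mem_of_sub_smul_mem_of_ne {c d : k} (hc : mono k u - c • mono k v ∈ I)
    (hd : mono k u - d • mono k v ∈ I) (hcd : c ≠ d) : mono k v ∈ I := by
  have hdiff : (c - d) • mono k v ∈ I := by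
    convert I.sub_mem hd hc using 1
    module
  exact (smul_mem_iff (sub_ne_zero.2 hcd)).1 hdiff

theorem indCong_of_mono_mem (hu : mono k u ∈ I) (hv : mono k v ∈ I) : indCong I u v :=
  ⟨1, one_ne_zero, by simpa using I.sub_mem hu hv⟩

theorem mono_mem_of_indCong (h : indCong I u v) (hu : mono k u ∈ I) : mono k v ∈ I := by
  obtain ⟨c, hc, hmem⟩ := h
  exact (smul_mem_iff hc).1 (by simpa using I.sub_mem hu hmem)

theorem le_of_mono_mem {A B : Ideal (AddMonoidAlgebra k Q)} (hB : IsBinomialIdeal B)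
    (hAB : A ≤ B) (hcong : ∀ u v, indCong B u v → indCong A u v)
    (hmono : ∀ u, mono k u ∈ B → mono k u ∈ A) : B ≤ A := by
  obtain ⟨S, rfl, hS⟩ := hB
  refine Ideal.span_le.2 fun f hf ↦ ?_
  have hfB : f ∈ Ideal.span S := Ideal.subset_span hf
  obtain ⟨u, v, c, rfl⟩ := hS f hf
  rcases eq_or_ne c 0 with rfl | hc
  · simpa using hmono u (by simpa using hfB)
  obtain ⟨d, -, hdA⟩ := hcong u v ⟨c, hc, hfB⟩
  rcases eq_or_ne d c with rfl | hdc
  · exact hdA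
  have hvA : mono k v ∈ A := hmono v (mono_mem_of_sub_smul_mem_of_ne (hAB hdA) hfB hdc)
  exact A.sub_mem (mono_mem_of_sub_smul_mem hdA hvA) (A.smul_of_tower_mem c hvA)

theorem exists_mono_mem_notMem_of_lt {A B : Ideal (AddMonoidAlgebra k Q)}
    (hB : IsBinomialIdeal B) (hAB : A < B) (hcong : ∀ u v, indCong B u v → indCong A u v) :
    ∃ u, mono k u ∈ B ∧ mono k u ∉ A := by
  by_contra! hmono
  exact hAB.not_ge (le_of_mono_mem hB hAB.le hcong hmono)

end BinomialIdeal

open BinomialIdeal in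
/-- If `I 0 ⊊ I 1 ⊊ ⋯ ⊊ I ℓ` are distinct binomial ideals all inducing the
same congruence on `Q`, then `ℓ ≤ 1`. -/
theorem chain_of_binomial_ideals_same_congruence
    (ℓ : ℕ) (I : Fin (ℓ + 1) → Ideal (AddMonoidAlgebra k Q))
    (hbin : ∀ i, IsBinomialIdeal (I i))
    (hchain : ∀ i j : Fin (ℓ + 1), i < j → I i < I j)
    (hsame : ∀ (i j : Fin (ℓ + 1)) (u v : Q), indCong (I i) u v ↔ indCong (I j) u v) :
    ℓ ≤ 1 := by
  by_contra! hℓ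
  let i₀ : Fin (ℓ + 1) := ⟨0, by omega⟩
  let i₁ : Fin (ℓ + 1) := ⟨1, by omega⟩
  let i₂ : Fin (ℓ + 1) := ⟨2, by omega⟩
  have h₀₁ : I i₀ < I i₁ := hchain i₀ i₁ (Fin.mk_lt_mk.2 (by omega))
  have h₁₂ : I i₁ < I i₂ := hchain i₁ i₂ (Fin.mk_lt_mk.2 (by omega))
  obtain ⟨u, hu₁, -⟩ :=
    exists_mono_mem_notMem_of_lt (hbin i₁) h₀₁ fun u v ↦ (hsame i₁ i₀ u v).1
  obtain ⟨w, hw₂, hw₁⟩ :=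
    exists_mono_mem_notMem_of_lt (hbin i₂) h₁₂ fun u v ↦ (hsame i₂ i₁ u v).1
  have huw : indCong (I i₁) u w :=
    (hsame i₂ i₁ u w).1 (indCong_of_mono_mem (h₁₂.le hu₁) hw₂)
  exact hw₁ (mono_mem_of_indCong huw hu₁)
end

section
/- If I is a cellular binomial ideal in k[Q] (every monomial is a nonzerodivisor or nilpotent modulo I) and the congruence induced by I has a nil class, then I contains a monomial; consequently I is maximal among binomial ideals inducing its congruence. -/
/-! A cellular binomial ideal whose induced congruence has a nil class
contains a monomial, and consequently is maximal among binomial ideals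
inducing its congruence.  (The nil class — the class of the monomials lying
in the ideal — is distinct from the class of the identity, as depicted in the
paper's figures; without this the claim degenerates.) -/

variable {k : Type*} [Field k] {Q : Type*} [AddCommMonoid Q]

/-- A binomial ideal is cellular if every monomial is a nonzerodivisor or
nilpotent modulo `I`. -/
def IsCellular (I : Ideal (AddMonoidAlgebra k Q)) : Prop :=
  ∀ q : Q, (∀ f : AddMonoidAlgebra k Q, f * mono k q ∈ I → f ∈ I) ∨
    ∃ n : ℕ, 0 < n ∧ (mono k q) ^ n ∈ I

/-! If `q₀` lies in the nil class, then `q₀ + q₀ ∼ q₀`. Were `t^q₀` a nonzerodivisor modulo `I`,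
cancelling it from `t^(2q₀) − λ t^q₀ ∈ I` would give `q₀ ∼ 0`; so `t^q₀` is nilpotent, and
`n q₀ ∼ q₀` with `t^(n q₀) ∈ I` puts `t^q₀` in `I`.
Once `t^q₀ ∈ I`, every monomial `t^u` of a larger ideal `J` with the same congruence satisfies
`u ∼_J u + q₀`, hence `u ∼_I u + q₀`, so `t^u ∈ I`; from this each binomial generator of `J`
lies in `I`. -/

lemma mono_mul (u v : Q) : mono k u * mono k v = mono k (u + v) := by
  simp [mono, AddMonoidAlgebra.single_mul_single]

lemma mono_pow (q : Q) (n : ℕ) : mono k q ^ n = mono k (n • q) := by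
  induction n with
  | zero => simp [mono, AddMonoidAlgebra.one_def]
  | succ m ih => rw [pow_succ, ih, mono_mul, succ_nsmul]

lemma Ideal.mem_of_smul_mem_of_ne_zero {A : Type*} [Semiring A] [Module k A]
    [IsScalarTower k A A] {I : Ideal A} {c : k} (hc : c ≠ 0) {x : A} (h : c • x ∈ I) : x ∈ I :=
  (I.smul_mem_iff' (Units.mk0 c hc)).mp h

section

variable {I J : Ideal (AddMonoidAlgebra k Q)}

lemma indCong.mono_mem_iff {u v : Q} (h : indCong I u v) : mono k u ∈ I ↔ mono k v ∈ I := by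
  obtain ⟨lam, hlam, hmem⟩ := h
  refine ⟨fun hu => I.mem_of_smul_mem_of_ne_zero hlam ?_, fun hv => ?_⟩
  · simpa using I.sub_mem hu hmem
  · simpa using I.add_mem hmem (I.smul_of_tower_mem lam hv)

lemma indCong_zero_of_mono_cancel {q : Q} (hnzd : ∀ f, f * mono k q ∈ I → f ∈ I)
    (h : indCong I (q + q) q) : indCong I q 0 := by
  obtain ⟨lam, hlam, hmem⟩ := h
  refine ⟨lam, hlam, hnzd _ ?_⟩
  rwa [sub_mul, smul_mul_assoc, mono_mul, mono_mul, zero_add]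

theorem IsCellular.mono_mem_of_absorbing (hcell : IsCellular I) {q₀ : Q}
    (habs : ∀ a, indCong I (a + q₀) q₀) (hne : ¬ indCong I q₀ 0) : mono k q₀ ∈ I := by
  rcases hcell q₀ with hnzd | ⟨n, hn, hpow⟩
  · exact absurd (indCong_zero_of_mono_cancel hnzd (habs q₀)) hne
  · have hcong : indCong I (n • q₀) q₀ := by
      simpa only [← succ_nsmul, Nat.sub_add_cancel hn] using habs ((n - 1) • q₀)
    rw [mono_pow] at hpow
    exact hcong.mono_mem_iff.mp hpow

lemma mono_mem_of_le_of_indCong_iff (hle : I ≤ J)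
    (hcong : ∀ u v, indCong I u v ↔ indCong J u v) {q₀ : Q} (hq₀ : mono k q₀ ∈ I)
    {u : Q} (hu : mono k u ∈ J) : mono k u ∈ I := by
  have hI : mono k (u + q₀) ∈ I := by
    rw [← mono_mul]
    exact I.mul_mem_left _ hq₀
  have hJ : indCong J u (u + q₀) := ⟨1, one_ne_zero, by simpa using J.sub_mem hu (hle hI)⟩
  exact ((hcong _ _).mpr hJ).mono_mem_iff.mpr hI

lemma binomial_mem_of_le_of_indCong_iff (hle : I ≤ J)
    (hcong : ∀ u v, indCong I u v ↔ indCong J u v) {q₀ : Q} (hq₀ : mono k q₀ ∈ I)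
    {u v : Q} {lam : k}
    (h : mono k u - lam • mono k v ∈ J) : mono k u - lam • mono k v ∈ I := by
  by_cases hlam : lam = 0
  · subst hlam
    simp only [zero_smul, sub_zero] at h ⊢
    exact mono_mem_of_le_of_indCong_iff hle hcong hq₀ h
  obtain ⟨μ, hμ, hm⟩ := (hcong u v).mpr ⟨lam, hlam, h⟩
  by_cases hμl : μ = lam
  · exact hμl ▸ hm
  -- two binomials `t^u − λ t^v`, `t^u − μ t^v` with `λ ≠ μ` force `t^v` into `J`
  have hvJ : mono k v ∈ J := by
    refine J.mem_of_smul_mem_of_ne_zero (sub_ne_zero_of_ne hμl) ?_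
    convert J.sub_mem h (hle hm) using 1
    rw [sub_smul]; abel
  have hvI := mono_mem_of_le_of_indCong_iff hle hcong hq₀ hvJ
  have huI := indCong.mono_mem_iff ⟨μ, hμ, hm⟩ |>.mpr hvI
  exact I.sub_mem huI (I.smul_of_tower_mem lam hvI)

theorem eq_of_le_of_indCong_iff (hle : I ≤ J)
    (hcong : ∀ u v, indCong I u v ↔ indCong J u v) {q₀ : Q} (hq₀ : mono k q₀ ∈ I)
    (hJ : IsBinomialIdeal J) : J = I := by
  obtain ⟨S, rfl, hS⟩ := hJ
  refine le_antisymm (Ideal.span_le.mpr fun f hf => ?_) hle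
  obtain ⟨u, v, lam, rfl⟩ := hS f hf
  exact binomial_mem_of_le_of_indCong_iff hle hcong hq₀ (Ideal.subset_span hf)

end

theorem cellular_with_nil_contains_monomial_and_is_maximal_general
    (I : Ideal (AddMonoidAlgebra k Q))
    (hcell : IsCellular I)
    (hnil : ∃ q₀ : Q, (∀ a : Q, indCong I (a + q₀) q₀) ∧ ¬ indCong I q₀ 0) :
    (∃ q : Q, mono k q ∈ I) ∧
      ∀ J : Ideal (AddMonoidAlgebra k Q), IsBinomialIdeal J → I ≤ J →
        (∀ u v : Q, indCong I u v ↔ indCong J u v) → J = I := by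
  obtain ⟨q₀, habs, hne⟩ := hnil
  have hq₀ : mono k q₀ ∈ I := hcell.mono_mem_of_absorbing habs hne
  exact ⟨⟨q₀, hq₀⟩, fun J hJ hle hcong => eq_of_le_of_indCong_iff hle hcong hq₀ hJ⟩

/-- If `I` is a cellular binomial ideal whose induced congruence has a
(nonidentity) nil class, then `I` contains a monomial; consequently `I` is
maximal among binomial ideals inducing its congruence. -/
theorem cellular_with_nil_contains_monomial_and_is_maximal
    (I : Ideal (AddMonoidAlgebra k Q)) (hbin : IsBinomialIdeal I)
    (hcell : IsCellular I)
    (hnil : ∃ q₀ : Q, (∀ a : Q, indCong I (a + q₀) q₀) ∧ ¬ indCong I q₀ 0) :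
    (∃ q : Q, mono k q ∈ I) ∧
      ∀ J : Ideal (AddMonoidAlgebra k Q), IsBinomialIdeal J → I ≤ J →
        (∀ u v : Q, indCong I u v ↔ indCong J u v) → J = I :=
  cellular_with_nil_contains_monomial_and_is_maximal_general I hcell hnil
end

section
/- If a binomial ideal I in the monoid algebra k[Q] is the kernel of a monomial homomorphism onto a (twisted) group algebra—i.e., I is a mesoprime—then every element of the quotient monoid Q/∼_I is either nil or cancellative; that is, the congruence induced by I is prime. -/
open TensorProduct

/-! A mesoprime — the kernel of a monomial homomorphism from `k[Q]` onto a
twisted group algebra — induces a prime congruence on `Q`: every element of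
the quotient monoid `Q/∼_I` is either nil or cancellative.

A twisted group algebra over `k` is a `G`-graded `k`-algebra (`G` an abelian
group) that becomes isomorphic, `G`-gradedly, to the group algebra after
extending scalars to the algebraic closure of `k`; a monomial homomorphism
sends each monomial to a homogeneous element (possibly `0`). -/

variable {k : Type*} [Field k] {Q : Type*} [AddCommMonoid Q]

/-! A monomial `t^q` either dies under `φ`, and then it is nil modulo `I`, or it maps to a nonzero
homogeneous element `x` of the twisted group algebra. After extending scalars to `k̄`, `x` becomes
`c • t^g` with `c ≠ 0`, a unit of `k̄[G]`; since `R → k̄ ⊗[k] R` is injective, `x` is a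
non-zero-divisor of `R`, and cancelling it shows that `q` is cancellative modulo `I`. -/

theorem AddMonoidAlgebra.isUnit_single {K G : Type*} [Semiring K] [AddGroup G] (g : G) {c : K}
    (hc : IsUnit c) : IsUnit (single g c) := by
  obtain ⟨u, rfl⟩ := hc
  refine ⟨⟨single g u, single (-g) ↑u⁻¹, ?_, ?_⟩, rfl⟩ <;> simp [single_mul_single, one_def]

theorem IsLeftRegular.of_map {M N F : Type*} [Mul M] [Mul N] [FunLike F M N] [MulHomClass F M N]
    (f : F) (hf : Function.Injective f) {x : M} (hx : IsLeftRegular (f x)) : IsLeftRegular x :=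
  fun a b hab => hf <| hx <| by simpa only [map_mul] using congrArg f hab

theorem isLeftRegular_of_one_tmul_eq_single {K R G : Type*} [Field K] [Algebra k K]
    [Ring R] [Algebra k R] [AddGroup G] (e : K ⊗[k] R ≃+* AddMonoidAlgebra K G)
    {x : R} (hx : x ≠ 0) {g : G} {c : K} (hc : e (1 ⊗ₜ[k] x) = AddMonoidAlgebra.single g c) :
    IsLeftRegular x := by
  have hinj : Function.Injective (Algebra.TensorProduct.includeRight : R →ₐ[k] K ⊗[k] R) :=
    Algebra.TensorProduct.includeRight_injective (algebraMap k K).injective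
  have hc0 : c ≠ 0 := by
    rintro rfl
    rw [AddMonoidAlgebra.single_zero, map_eq_zero_iff e e.injective] at hc
    exact hx (hinj (by simpa using hc))
  have hunit : IsUnit ((1 : K) ⊗ₜ[k] x) := by
    rw [← isUnit_map_iff e, hc]
    exact AddMonoidAlgebra.isUnit_single g (IsUnit.mk0 c hc0)
  exact IsLeftRegular.of_map Algebra.TensorProduct.includeRight hinj hunit.isRegular.left

section InducedCongruence

variable {R : Type*} [Ring R] [Algebra k R] (φ : AddMonoidAlgebra k Q →ₐ[k] R)

theorem mono_add (a b : Q) : mono k (a + b) = mono k a * mono k b := by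
  simp [mono, AddMonoidAlgebra.single_mul_single]

theorem indCong_ker_iff {u v : Q} :
    indCong (RingHom.ker (φ : AddMonoidAlgebra k Q →+* R)) u v ↔
      ∃ lam : k, lam ≠ 0 ∧ φ (mono k u) = lam • φ (mono k v) := by
  simp [indCong, RingHom.mem_ker, sub_eq_zero]

theorem indCong_ker_add_left_of_map_eq_zero {q : Q} (hq : φ (mono k q) = 0) (a : Q) :
    indCong (RingHom.ker (φ : AddMonoidAlgebra k Q →+* R)) (a + q) q :=
  (indCong_ker_iff φ).2 ⟨1, one_ne_zero, by simp [mono_add, hq]⟩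

theorem indCong_ker_of_add_left {q : Q} (hq : IsLeftRegular (φ (mono k q))) {a b : Q}
    (h : indCong (RingHom.ker (φ : AddMonoidAlgebra k Q →+* R)) (q + a) (q + b)) :
    indCong (RingHom.ker (φ : AddMonoidAlgebra k Q →+* R)) a b := by
  obtain ⟨lam, hlam, hab⟩ := (indCong_ker_iff φ).1 h
  refine (indCong_ker_iff φ).2 ⟨lam, hlam, hq ?_⟩
  simpa only [mono_add, map_mul, mul_smul_comm] using hab

end InducedCongruence

theorem mesoprime_induces_prime_congruence_general
    {G : Type*} [AddCommGroup G] {R : Type*} [CommRing R] [Algebra k R]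
    (𝒜 : G → Submodule k R)
    (htwisted : ∃ e : (AlgebraicClosure k ⊗[k] R) ≃ₐ[AlgebraicClosure k]
        AddMonoidAlgebra (AlgebraicClosure k) G,
      ∀ g : G, ∀ x ∈ 𝒜 g, ∃ c : AlgebraicClosure k,
        e ((1 : AlgebraicClosure k) ⊗ₜ[k] x) = AddMonoidAlgebra.single g c)
    (φ : AddMonoidAlgebra k Q →ₐ[k] R)
    (hmono : ∀ q : Q, ∃ g : G, φ (mono k q) ∈ 𝒜 g)
    (I : Ideal (AddMonoidAlgebra k Q))
    (hI : I = RingHom.ker (φ : AddMonoidAlgebra k Q →+* R)) :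
    ∀ q : Q, (∀ a : Q, indCong I (a + q) q) ∨
      (∀ a b : Q, indCong I (q + a) (q + b) → indCong I a b) := by
  subst hI
  intro q
  obtain ⟨e, he⟩ := htwisted
  obtain ⟨g, hg⟩ := hmono q
  by_cases hq : φ (mono k q) = 0
  · exact .inl (indCong_ker_add_left_of_map_eq_zero φ hq)
  · obtain ⟨c, hc⟩ := he g _ hg
    exact .inr fun a b =>
      indCong_ker_of_add_left φ (isLeftRegular_of_one_tmul_eq_single e.toRingEquiv hq hc)

/-- If `I` is the kernel of a monomial homomorphism `φ : k[Q] → R` onto a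
twisted group algebra `R` (graded by the abelian group `G`, with a graded
isomorphism to the group algebra over the algebraic closure of `k`), then the
congruence induced by `I` is prime: every element of `Q/∼_I` is nil or
cancellative. -/
theorem mesoprime_induces_prime_congruence
    {G : Type*} [AddCommGroup G] [DecidableEq G] {R : Type*} [CommRing R] [Algebra k R]
    (𝒜 : G → Submodule k R)
    (hinternal : DirectSum.IsInternal 𝒜)
    (hmul : ∀ g h : G, ∀ x ∈ 𝒜 g, ∀ y ∈ 𝒜 h, x * y ∈ 𝒜 (g + h))
    (htwisted : ∃ e : (AlgebraicClosure k ⊗[k] R) ≃ₐ[AlgebraicClosure k]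
        AddMonoidAlgebra (AlgebraicClosure k) G,
      ∀ g : G, ∀ x ∈ 𝒜 g, ∃ c : AlgebraicClosure k,
        e ((1 : AlgebraicClosure k) ⊗ₜ[k] x) = AddMonoidAlgebra.single g c)
    (φ : AddMonoidAlgebra k Q →ₐ[k] R)
    (hsurj : Function.Surjective φ)
    (hmono : ∀ q : Q, ∃ g : G, φ (mono k q) ∈ 𝒜 g)
    (I : Ideal (AddMonoidAlgebra k Q))
    (hI : I = RingHom.ker (φ : AddMonoidAlgebra k Q →+* R)) :
    ∀ q : Q, (∀ a : Q, indCong I (a + q) q) ∨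
      (∀ a b : Q, indCong I (q + a) (q + b) → indCong I a b) :=
  mesoprime_induces_prime_congruence_general 𝒜 htwisted φ hmono I hI
end
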